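/- arXiv:2502.16827 — 3 statements merged into one kernel-verified Lean document; each statement's English description precedes it below -/
import Mathlib

section
/- Let A be an m x n random matrix whose columns A_i are independent, mean-zero, subgaussian random vectors with ||A_i||_2 = 1 almost surely and ||A_i||_{psi_2} <= K. For any unit vector x, the random variable S = ||Ax||_2^2 - 1 satisfies the MGF bound E exp(lambda*S) <= exp(C*lambda^2*K^2) for all |lambda| <= c/K^2, where C, c > 0 are absolute constants. -/
/-!
Each column has mean-zero marginals `⟪A i, w⟫`, bounded by `‖w‖` and with `ψ₂`-norm at most
`K ‖w‖`, so their moment generating function is at most `exp (v a² ‖w‖²)` with `v = 8 K²`.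
Reveal the columns one at a time. For a partial sum `W`,
`‖W + xᵢ Aᵢ‖² = ‖W‖² + 2 xᵢ ⟪Aᵢ, W⟫ + xᵢ²`, so integrating out `Aᵢ` with `W` fixed costs a
factor `exp (4 v b² xᵢ² ‖W‖²)`, i.e. it replaces the exponent parameter `b` by `b + 4 v b² xᵢ²`.
Since this shift is small when `|b| ≲ 1 / v`, an induction over the revealed columns, in which
the admissible range `(2 - σ) / (16 v)` of `b` shrinks as `σ = ∑ xᵢ²` grows, yields
`𝔼 exp (b (‖W‖² - σ)) ≤ exp (6 v b² (exp (2σ) - 1))`.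
-/

open MeasureTheory ProbabilityTheory Real
open scoped BigOperators ENNReal

/-- The subgaussian (psi_2) norm of a real random variable. -/
noncomputable def psi2 {Ω : Type*} [MeasurableSpace Ω] (μ : Measure Ω) (Z : Ω → ℝ) : ℝ :=
  sInf {t : ℝ | 0 < t ∧ ∫ ω, Real.exp (Z ω ^ 2 / t ^ 2) ∂μ ≤ 2}

/-- A real random variable is subgaussian. -/
def Subgaussian {Ω : Type*} [MeasurableSpace Ω] (μ : Measure Ω) (Z : Ω → ℝ) : Prop :=
  ∃ t : ℝ, 0 < t ∧ ∫ ω, Real.exp (Z ω ^ 2 / t ^ 2) ∂μ ≤ 2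

/-- The subgaussian norm of a random vector: sup of marginal subgaussian norms. -/
noncomputable def vpsi2 {Ω : Type*} [MeasurableSpace Ω] (μ : Measure Ω) {m : ℕ}
    (V : Ω → EuclideanSpace ℝ (Fin m)) : ℝ :=
  ⨆ u : {u : EuclideanSpace ℝ (Fin m) // ‖u‖ = 1},
    psi2 μ (fun ω => (inner ℝ (V ω) (u : EuclideanSpace ℝ (Fin m)) : ℝ))

/-- A random vector is subgaussian: a uniform witness over all directions. -/
def SubgaussianVec {Ω : Type*} [MeasurableSpace Ω] (μ : Measure Ω) {m : ℕ}
    (V : Ω → EuclideanSpace ℝ (Fin m)) : Prop :=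
  ∃ t : ℝ, 0 < t ∧ ∀ u : EuclideanSpace ℝ (Fin m), ‖u‖ = 1 →
    ∫ ω, Real.exp ((inner ℝ (V ω) u : ℝ) ^ 2 / t ^ 2) ∂μ ≤ 2

lemma exp_le_add_exp_sq (x : ℝ) : exp x ≤ x + exp (x ^ 2) := by
  rcases le_or_gt |x| 1 with h | h
  · have hquad : exp x ≤ x ^ 2 * (3 / (2 * 2)) + (1 + x) := by
      simpa [Finset.sum_range_succ] using (abs_le.mp (Real.exp_bound h (n := 2) (by norm_num))).2
    nlinarith [add_one_le_exp (x ^ 2), sq_nonneg x]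
  · rcases le_or_gt 0 x with hx | hx
    · have : x ≤ x ^ 2 := by nlinarith [abs_of_nonneg hx]
      linarith [exp_le_exp.mpr this]
    · have : -x ≤ x ^ 2 := by nlinarith [abs_of_neg hx]
      linarith [exp_le_one_iff.mpr hx.le, add_one_le_exp (-x), exp_le_exp.mpr this]

lemma exp_mul_le_one_sub_add_mul_exp {θ : ℝ} (hθ0 : 0 ≤ θ) (hθ1 : θ ≤ 1) (y : ℝ) :
    exp (θ * y) ≤ 1 - θ + θ * exp y := by
  simpa using convexOn_exp.2 (Set.mem_univ 0) (Set.mem_univ y) (sub_nonneg.2 hθ1) hθ0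
    (sub_add_cancel 1 θ)

lemma mul_le_sq_mul_sq_add_sq_div_sq {t : ℝ} (ht : 0 < t) (a z : ℝ) :
    a * z ≤ (a ^ 2 * t ^ 2 + z ^ 2 / t ^ 2) / 2 := by
  have := two_mul_le_add_sq (a * t) (z / t)
  have hcancel : a * t * (z / t) = a * z := by field_simp
  rw [mul_pow, div_pow, mul_assoc, hcancel] at this
  linarith

lemma exp_mul_le_exp_mul_exp_sq_div_sq {t : ℝ} (ht : 0 < t) (a z : ℝ) :
    exp (a * z) ≤ exp (a ^ 2 * t ^ 2 / 2) * exp (z ^ 2 / t ^ 2) := by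
  rw [← exp_add, exp_le_exp]
  have := mul_le_sq_mul_sq_add_sq_div_sq ht a z
  have : 0 ≤ z ^ 2 / t ^ 2 := by positivity
  linarith

lemma exp_mul_le_add_one_sub_add_mul_exp_sq_div_sq {t a : ℝ} (ht : 0 < t)
    (hat : a ^ 2 * t ^ 2 ≤ 1) (z : ℝ) :
    exp (a * z) ≤ a * z + (1 - a ^ 2 * t ^ 2 + a ^ 2 * t ^ 2 * exp (z ^ 2 / t ^ 2)) := by
  have hsq : (a * z) ^ 2 = a ^ 2 * t ^ 2 * (z ^ 2 / t ^ 2) := by field_simp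
  linarith [exp_le_add_exp_sq (a * z),
    hsq ▸ exp_mul_le_one_sub_add_mul_exp (by positivity) hat (z ^ 2 / t ^ 2)]

section Scalar

variable {Ω : Type*} [MeasurableSpace Ω] {μ : Measure Ω} [IsProbabilityMeasure μ]

theorem integral_exp_mul_le_of_integral_exp_sq_le_two {Z : Ω → ℝ} {t : ℝ} (ht : 0 < t)
    (hZ : Integrable Z μ) (hmean : ∫ ω, Z ω ∂μ = 0)
    (hψint : Integrable (fun ω => exp (Z ω ^ 2 / t ^ 2)) μ)
    (hψ : ∫ ω, exp (Z ω ^ 2 / t ^ 2) ∂μ ≤ 2) (a : ℝ) :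
    ∫ ω, exp (a * Z ω) ∂μ ≤ exp (2 * (a ^ 2 * t ^ 2)) := by
  set θ := a ^ 2 * t ^ 2
  have hθ0 : 0 ≤ θ := by positivity
  have hint : Integrable (fun ω => exp (a * Z ω)) μ :=
    (hψint.const_mul _).mono'
      (continuous_exp.comp_aestronglyMeasurable (hZ.aestronglyMeasurable.const_mul a))
      (.of_forall fun ω => by
        simpa [abs_of_pos (exp_pos _)] using exp_mul_le_exp_mul_exp_sq_div_sq ht a (Z ω))
  rcases le_or_gt θ 1 with hθ1 | hθ1
  · have hint₂ : Integrable (fun ω => 1 - θ + θ * exp (Z ω ^ 2 / t ^ 2)) μ :=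
      (integrable_const _).add (hψint.const_mul θ)
    calc ∫ ω, exp (a * Z ω) ∂μ
        ≤ ∫ ω, (a * Z ω + (1 - θ + θ * exp (Z ω ^ 2 / t ^ 2))) ∂μ :=
          integral_mono hint ((hZ.const_mul a).add hint₂)
            (exp_mul_le_add_one_sub_add_mul_exp_sq_div_sq ht hθ1 <| Z ·)
      _ = 1 - θ + θ * ∫ ω, exp (Z ω ^ 2 / t ^ 2) ∂μ := by
          rw [integral_add (hZ.const_mul a) hint₂, integral_add (integrable_const _)
            (hψint.const_mul θ), integral_const_mul, integral_const_mul, hmean]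
          simp
      _ ≤ 1 + θ := by nlinarith
      _ ≤ exp θ := by linarith [add_one_le_exp θ]
      _ ≤ exp (2 * θ) := exp_le_exp.mpr (by linarith)
  · calc ∫ ω, exp (a * Z ω) ∂μ
        ≤ ∫ ω, exp (θ / 2) * exp (Z ω ^ 2 / t ^ 2) ∂μ :=
          integral_mono hint (hψint.const_mul _) (exp_mul_le_exp_mul_exp_sq_div_sq ht a <| Z ·)
      _ ≤ exp (θ / 2) * exp 1 := by
          rw [integral_const_mul]
          gcongr
          linarith [add_one_le_exp (1 : ℝ)]
      _ ≤ exp (2 * θ) := by rw [← exp_add, exp_le_exp]; linarith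

end Scalar

section Boundedness

variable {Ω E G : Type*} [MeasurableSpace Ω] {μ : Measure Ω} [IsFiniteMeasure μ]
  [TopologicalSpace E] [MeasurableSpace E] [OpensMeasurableSpace E] [SecondCountableTopology E]
  [TopologicalSpace.PseudoMetrizableSpace E] [NormedAddCommGroup G]

lemma Continuous.integrable_comp_of_ae_mem_compact {f : E → G} (hf : Continuous f)
    {X : Ω → E} (hX : AEMeasurable X μ) {S : Set E} (hS : IsCompact S)
    (hXS : ∀ᵐ ω ∂μ, X ω ∈ S) : Integrable (fun ω => f (X ω)) μ := by
  obtain ⟨C, hC⟩ := hS.exists_bound_of_continuousOn hf.continuousOn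
  exact .of_bound (hf.comp_aestronglyMeasurable hX.aestronglyMeasurable) C
    (hXS.mono fun ω h => hC _ h)

end Boundedness

section Psi2

variable {Ω : Type*} [MeasurableSpace Ω] {μ : Measure Ω}

lemma psi2_le {Z : Ω → ℝ} {t : ℝ} (ht : 0 < t) (h : ∫ ω, exp (Z ω ^ 2 / t ^ 2) ∂μ ≤ 2) :
    psi2 μ Z ≤ t :=
  csInf_le ⟨0, fun _ hs => hs.1.le⟩ ⟨ht, h⟩

lemma integral_exp_sq_div_sq_le_two_of_psi2_lt {Z : Ω → ℝ}
    (hint : ∀ t, 0 < t → Integrable (fun ω => exp (Z ω ^ 2 / t ^ 2)) μ)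
    (hZ : Subgaussian μ Z) {s : ℝ} (hs : psi2 μ Z < s) :
    ∫ ω, exp (Z ω ^ 2 / s ^ 2) ∂μ ≤ 2 := by
  obtain ⟨t, ⟨ht, hψ⟩, hts⟩ := exists_lt_of_csInf_lt hZ hs
  calc ∫ ω, exp (Z ω ^ 2 / s ^ 2) ∂μ ≤ ∫ ω, exp (Z ω ^ 2 / t ^ 2) ∂μ :=
        integral_mono (hint s (ht.trans hts)) (hint t ht) fun ω =>
          exp_le_exp.2 (by gcongr)
    _ ≤ 2 := hψ

variable {m : ℕ} {V : Ω → EuclideanSpace ℝ (Fin m)}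

lemma SubgaussianVec.subgaussian_inner (hV : SubgaussianVec μ V)
    {u : EuclideanSpace ℝ (Fin m)} (hu : ‖u‖ = 1) :
    Subgaussian μ (fun ω => inner ℝ (V ω) u) :=
  let ⟨t, ht, h⟩ := hV; ⟨t, ht, h u hu⟩

lemma SubgaussianVec.psi2_inner_le_vpsi2 (hV : SubgaussianVec μ V)
    {u : EuclideanSpace ℝ (Fin m)} (hu : ‖u‖ = 1) :
    psi2 μ (fun ω => inner ℝ (V ω) u) ≤ vpsi2 μ V := by
  obtain ⟨t, ht, h⟩ := hV
  exact le_ciSup (f := fun u : {u : EuclideanSpace ℝ (Fin m) // ‖u‖ = 1} =>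
      psi2 μ (fun ω => inner ℝ (V ω) (u : EuclideanSpace ℝ (Fin m))))
    ⟨t, Set.forall_mem_range.2 fun u => psi2_le ht (h u u.2)⟩ ⟨u, hu⟩

end Psi2

section Column

variable {Ω : Type*} [MeasurableSpace Ω] {μ : Measure Ω} [IsProbabilityMeasure μ] {m : ℕ}
  {V : Ω → EuclideanSpace ℝ (Fin m)}

theorem integral_exp_mul_inner_le (hV : Integrable V μ) (hmean : ∫ ω, V ω ∂μ = 0)
    (hsub : SubgaussianVec μ V) (hnorm : ∀ᵐ ω ∂μ, ‖V ω‖ = 1) {K : ℝ} (hK : 0 < K)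
    (hVK : vpsi2 μ V ≤ K) (w : EuclideanSpace ℝ (Fin m)) (a : ℝ) :
    ∫ ω, exp (a * inner ℝ (V ω) w) ∂μ ≤ exp (8 * K ^ 2 * a ^ 2 * ‖w‖ ^ 2) := by
  rcases eq_or_ne w 0 with rfl | hw
  · simp
  set u := ‖w‖⁻¹ • w
  have hu : ‖u‖ = 1 := norm_smul_inv_norm hw
  set Z : Ω → ℝ := fun ω => inner ℝ (V ω) u
  have hZm : AEStronglyMeasurable Z μ := hV.aestronglyMeasurable.inner aestronglyMeasurable_const
  have hZ1 : ∀ᵐ ω ∂μ, Z ω ∈ Metric.closedBall 0 1 := hnorm.mono fun ω hω => by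
    simpa [hω, hu] using abs_real_inner_le_norm (V ω) u
  have hZint : ∀ t, 0 < t → Integrable (fun ω => exp (Z ω ^ 2 / t ^ 2)) μ := fun t _ =>
    (continuous_exp.comp ((continuous_pow 2).div_const _)).integrable_comp_of_ae_mem_compact
      hZm.aemeasurable (isCompact_closedBall 0 1) hZ1
  have hZmean : ∫ ω, Z ω ∂μ = 0 := by
    change ∫ ω, inner ℝ (V ω) u ∂μ = 0
    simp_rw [real_inner_comm u, integral_inner hV u, hmean, inner_zero_right]
  -- `psi2` is an infimum that need not be attained, so we pass to the larger scale `2 K`.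
  have hψ : ∫ ω, exp (Z ω ^ 2 / (2 * K) ^ 2) ∂μ ≤ 2 :=
    integral_exp_sq_div_sq_le_two_of_psi2_lt hZint (hsub.subgaussian_inner hu)
      ((hsub.psi2_inner_le_vpsi2 hu).trans_lt (by linarith))
  have hscale : ∀ ω, a * inner ℝ (V ω) w = a * ‖w‖ * Z ω := fun ω => by
    have : ‖w‖ ≠ 0 := norm_ne_zero_iff.2 hw
    simp only [Z, u, real_inner_smul_right]
    field_simp
  simp_rw [hscale]
  calc ∫ ω, exp (a * ‖w‖ * Z ω) ∂μ ≤ exp (2 * ((a * ‖w‖) ^ 2 * (2 * K) ^ 2)) :=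
        integral_exp_mul_le_of_integral_exp_sq_le_two (by positivity)
          (continuous_id.integrable_comp_of_ae_mem_compact hZm.aemeasurable
            (isCompact_closedBall 0 1) hZ1) hZmean (hZint _ (by positivity)) hψ _
    _ = exp (8 * K ^ 2 * a ^ 2 * ‖w‖ ^ 2) := by ring_nf

end Column

section Independence

variable {Ω E F : Type*} [MeasurableSpace Ω] {μ : Measure Ω} [IsProbabilityMeasure μ]
  [NormedAddCommGroup E] [ProperSpace E] [MeasurableSpace E] [BorelSpace E]
  [NormedAddCommGroup F] [ProperSpace F] [MeasurableSpace F] [BorelSpace F]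

theorem ProbabilityTheory.IndepFun.integral_comp_le {X : Ω → E} {Y : Ω → F}
    (hX : AEMeasurable X μ) (hY : AEMeasurable Y μ) (hXY : IndepFun X Y μ) {r s : ℝ}
    (hXr : ∀ᵐ ω ∂μ, ‖X ω‖ ≤ r) (hYs : ∀ᵐ ω ∂μ, ‖Y ω‖ ≤ s) {Φ : E × F → ℝ} (hΦ : Continuous Φ)
    {g : E → ℝ} (hg : Continuous g) (hΦg : ∀ x, ∫ ω, Φ (x, Y ω) ∂μ ≤ g x) :
    ∫ ω, Φ (X ω, Y ω) ∂μ ≤ ∫ ω, g (X ω) ∂μ := by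
  have hXr' : ∀ᵐ ω ∂μ, X ω ∈ Metric.closedBall 0 r := hXr.mono fun ω h => by simpa using h
  have hYs' : ∀ᵐ ω ∂μ, Y ω ∈ Metric.closedBall 0 s := hYs.mono fun ω h => by simpa using h
  have hXY' : AEMeasurable (fun ω => (X ω, Y ω)) μ := hX.prodMk hY
  have hΦint : Integrable Φ ((μ.map X).prod (μ.map Y)) := by
    rw [← (indepFun_iff_map_prod_eq_prod_map_map hX hY).1 hXY,
      integrable_map_measure hΦ.aestronglyMeasurable hXY']
    exact hΦ.integrable_comp_of_ae_mem_compact hXY'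
      ((isCompact_closedBall 0 r).prod (isCompact_closedBall 0 s))
      (by filter_upwards [hXr', hYs'] with ω h₁ h₂ using ⟨h₁, h₂⟩)
  have hgint : Integrable g (μ.map X) := by
    rw [integrable_map_measure hg.aestronglyMeasurable hX]
    exact hg.integrable_comp_of_ae_mem_compact hX (isCompact_closedBall 0 r) hXr'
  calc ∫ ω, Φ (X ω, Y ω) ∂μ = ∫ p, Φ p ∂((μ.map X).prod (μ.map Y)) := by
        rw [← (indepFun_iff_map_prod_eq_prod_map_map hX hY).1 hXY,
          integral_map hXY' hΦ.aestronglyMeasurable]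
    _ = ∫ x, ∫ y, Φ (x, y) ∂(μ.map Y) ∂(μ.map X) := integral_prod Φ hΦint
    _ ≤ ∫ x, g x ∂(μ.map X) := integral_mono hΦint.integral_prod_left hgint fun x => by
        have hΦx : Continuous fun y => Φ (x, y) := hΦ.comp (.prodMk_right x)
        rw [integral_map hY hΦx.aestronglyMeasurable]
        exact hΦg x
    _ = ∫ ω, g (X ω) ∂μ := integral_map hX hg.aestronglyMeasurable

end Independence

section Arithmetic

variable {v b y σ : ℝ}

lemma four_mul_sq_mul_le_abs_mul (hv : 0 < v) (hb : |b| ≤ 1 / (8 * v)) (hy : 0 ≤ y) :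
    4 * v * b ^ 2 * y ≤ |b| * y / 2 := by
  have hvb : v * |b| ≤ 1 / 8 := by
    rw [le_div_iff₀ (by positivity)] at hb; linarith
  have : 4 * v * b ^ 2 * y = 4 * (v * |b|) * |b| * y := by rw [← sq_abs b]; ring
  rw [this]
  have := mul_le_mul_of_nonneg_right hvb (mul_nonneg (abs_nonneg b) hy)
  nlinarith

lemma two_sub_div_sixteen_mul_le (hv : 0 < v) (hσ : 0 ≤ σ) :
    (2 - σ) / (16 * v) ≤ 1 / (8 * v) := calc
  (2 - σ) / (16 * v) ≤ 2 / (16 * v) := by gcongr; linarith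
  _ = 1 / (8 * v) := by ring

lemma abs_add_four_mul_sq_mul_le (hv : 0 < v) (hy : 0 ≤ y) (hσ : 0 ≤ σ)
    (hb : |b| ≤ (2 - (y + σ)) / (16 * v)) :
    |b + 4 * v * b ^ 2 * y| ≤ (2 - σ) / (16 * v) := by
  have hb' : |b| ≤ 1 / (8 * v) := hb.trans (two_sub_div_sixteen_mul_le hv (by positivity))
  have hby : |b| * y / 2 ≤ y / (16 * v) := calc
    |b| * y / 2 ≤ 1 / (8 * v) * y / 2 := by gcongr
    _ = y / (16 * v) := by ring
  calc |b + 4 * v * b ^ 2 * y| ≤ |b| + 4 * v * b ^ 2 * y :=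
        (abs_add_le _ _).trans_eq (congrArg _ (abs_of_nonneg (by positivity)))
    _ ≤ (2 - (y + σ)) / (16 * v) + y / (16 * v) := by
        linarith [four_mul_sq_mul_le_abs_mul hv hb' hy]
    _ = (2 - σ) / (16 * v) := by ring

lemma mgf_exponent_step (hv : 0 < v) (hy₀ : 0 ≤ y) (hy₁ : y ≤ 1) (hσ : 0 ≤ σ)
    (hb : |b| ≤ 1 / (8 * v)) :
    4 * v * b ^ 2 * y * σ + 6 * v * (b + 4 * v * b ^ 2 * y) ^ 2 * (exp (2 * σ) - 1) ≤
      6 * v * b ^ 2 * (exp (2 * (y + σ)) - 1) := by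
  have hsq : (b + 4 * v * b ^ 2 * y) ^ 2 ≤ b ^ 2 * (1 + 5 / 4 * y) := by
    have habs : |b + 4 * v * b ^ 2 * y| ≤ |b| * (1 + y / 2) := by
      linarith [abs_add_le b (4 * v * b ^ 2 * y), abs_of_nonneg (by positivity :
        0 ≤ 4 * v * b ^ 2 * y), four_mul_sq_mul_le_abs_mul hv hb hy₀]
    calc (b + 4 * v * b ^ 2 * y) ^ 2 = |b + 4 * v * b ^ 2 * y| ^ 2 := (sq_abs _).symm
      _ ≤ (|b| * (1 + y / 2)) ^ 2 := by gcongr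
      _ = b ^ 2 * (1 + y / 2) ^ 2 := by rw [mul_pow, sq_abs]
      _ ≤ b ^ 2 * (1 + 5 / 4 * y) := by gcongr; nlinarith
  have hu : 1 + 2 * σ ≤ exp (2 * σ) := by linarith [add_one_le_exp (2 * σ)]
  have hexp : exp (2 * σ) * (1 + 2 * y) ≤ exp (2 * (y + σ)) := by
    rw [show 2 * (y + σ) = 2 * σ + 2 * y by ring, exp_add]
    gcongr
    linarith [add_one_le_exp (2 * y)]
  -- the two sides differ by `v b² y (9 exp(2σ) + 15 - 8σ) / 2 ≥ 0`
  have h₁ := mul_le_mul_of_nonneg_left hsq (by nlinarith : 0 ≤ 6 * v * (exp (2 * σ) - 1))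
  have h₂ := mul_le_mul_of_nonneg_left hexp (by positivity : 0 ≤ 6 * v * b ^ 2)
  have h₃ : 0 ≤ v * b ^ 2 * y * (9 * exp (2 * σ) + 15 - 8 * σ) :=
    mul_nonneg (by positivity) (by linarith)
  nlinarith

end Arithmetic

section PartialSums

variable {Ω E : Type*} [MeasurableSpace Ω] {μ : Measure Ω} [IsProbabilityMeasure μ]
  [NormedAddCommGroup E] [InnerProductSpace ℝ E] [FiniteDimensional ℝ E]
  [MeasurableSpace E] [BorelSpace E]

theorem integral_exp_norm_add_smul_sq_le {W V : Ω → E} (hW : AEMeasurable W μ)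
    (hV : AEMeasurable V μ) {c : ℝ} (hWV : IndepFun W (fun ω => c • V ω) μ) {r : ℝ}
    (hWr : ∀ᵐ ω ∂μ, ‖W ω‖ ≤ r) (hVnorm : ∀ᵐ ω ∂μ, ‖V ω‖ = 1) {v : ℝ}
    (hVmgf : ∀ (w : E) (a : ℝ), ∫ ω, exp (a * inner ℝ (V ω) w) ∂μ ≤ exp (v * a ^ 2 * ‖w‖ ^ 2))
    (b s : ℝ) :
    ∫ ω, exp (b * (‖W ω + c • V ω‖ ^ 2 - (c ^ 2 + s))) ∂μ ≤
      exp (4 * v * b ^ 2 * c ^ 2 * s) *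
        ∫ ω, exp ((b + 4 * v * b ^ 2 * c ^ 2) * (‖W ω‖ ^ 2 - s)) ∂μ := by
  rw [← integral_const_mul]
  refine hWV.integral_comp_le hW (hV.const_smul c) hWr (s := |c|) ?_
    (Φ := fun p => exp (b * (‖p.1 + p.2‖ ^ 2 - (c ^ 2 + s)))) (by fun_prop)
    (g := fun w => exp (4 * v * b ^ 2 * c ^ 2 * s) *
      exp ((b + 4 * v * b ^ 2 * c ^ 2) * (‖w‖ ^ 2 - s))) (by fun_prop) fun w => ?_
  · filter_upwards [hVnorm] with ω h
    simp [norm_smul, h]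
  calc ∫ ω, exp (b * (‖w + c • V ω‖ ^ 2 - (c ^ 2 + s))) ∂μ
      = ∫ ω, exp (b * (‖w‖ ^ 2 - s)) * exp (2 * b * c * inner ℝ (V ω) w) ∂μ := by
        refine integral_congr_ae (hVnorm.mono fun ω h => ?_)
        simp only [← exp_add, norm_add_sq_real, norm_smul, h, real_inner_smul_right,
          real_inner_comm w, Real.norm_eq_abs, mul_one, sq_abs]
        ring_nf
    _ ≤ exp (b * (‖w‖ ^ 2 - s)) * exp (v * (2 * b * c) ^ 2 * ‖w‖ ^ 2) := by
        rw [integral_const_mul]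
        gcongr
        exact hVmgf w _
    _ = exp (4 * v * b ^ 2 * c ^ 2 * s) *
          exp ((b + 4 * v * b ^ 2 * c ^ 2) * (‖w‖ ^ 2 - s)) := by
        rw [← exp_add, ← exp_add]
        ring_nf

theorem integral_exp_norm_sum_smul_sq_le {ι : Type*} {A : ι → Ω → E}
    (hAm : ∀ i, Measurable (A i)) (hA : iIndepFun A μ) (hAnorm : ∀ i, ∀ᵐ ω ∂μ, ‖A i ω‖ = 1)
    {v : ℝ} (hv : 0 < v)
    (hAmgf : ∀ i (w : E) (a : ℝ),
      ∫ ω, exp (a * inner ℝ (A i ω) w) ∂μ ≤ exp (v * a ^ 2 * ‖w‖ ^ 2))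
    {x : ι → ℝ} (hx : ∀ i, x i ^ 2 ≤ 1) (S : Finset ι) {b : ℝ}
    (hb : |b| ≤ (2 - ∑ i ∈ S, x i ^ 2) / (16 * v)) :
    ∫ ω, exp (b * (‖∑ i ∈ S, x i • A i ω‖ ^ 2 - ∑ i ∈ S, x i ^ 2)) ∂μ ≤
      exp (6 * v * b ^ 2 * (exp (2 * ∑ i ∈ S, x i ^ 2) - 1)) := by
  classical
  induction S using Finset.induction_on generalizing b with
  | empty => simp
  | insert i S hi ih =>
    rw [Finset.sum_insert hi] at hb ⊢
    simp_rw [Finset.sum_insert hi, add_comm (x i • A i _)]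
    set σ := ∑ j ∈ S, x j ^ 2
    have hσ : 0 ≤ σ := Finset.sum_nonneg fun j _ => sq_nonneg (x j)
    have hWm : AEMeasurable (fun ω => ∑ j ∈ S, x j • A j ω) μ := by
      fun_prop
    have hindep : IndepFun (fun ω => ∑ j ∈ S, x j • A j ω) (fun ω => x i • A i ω) μ := by
      have := (hA.comp (fun j v => x j • v) fun j => measurable_const_smul _)
        |>.indepFun_finsetSum_of_notMem (fun j => (hAm j).const_smul _) hi
      convert this using 1 <;> ext ω <;> simp [Finset.sum_apply]
    have hWr : ∀ᵐ ω ∂μ, ‖∑ j ∈ S, x j • A j ω‖ ≤ ∑ j ∈ S, |x j| := by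
      filter_upwards [(Filter.eventually_all_finset S).2 fun j _ => hAnorm j] with ω h
      exact norm_sum_le_of_le S fun j hj => by simp [norm_smul, h j hj]
    have hb₁ : |b| ≤ 1 / (8 * v) := hb.trans (two_sub_div_sixteen_mul_le hv (by positivity))
    calc _ ≤ exp (4 * v * b ^ 2 * x i ^ 2 * σ) *
          ∫ ω, exp ((b + 4 * v * b ^ 2 * x i ^ 2) * (‖∑ j ∈ S, x j • A j ω‖ ^ 2 - σ)) ∂μ :=
          integral_exp_norm_add_smul_sq_le hWm (hAm i).aemeasurable hindep hWr (hAnorm i)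
            (hAmgf i) b σ
      _ ≤ exp (4 * v * b ^ 2 * x i ^ 2 * σ) *
          exp (6 * v * (b + 4 * v * b ^ 2 * x i ^ 2) ^ 2 * (exp (2 * σ) - 1)) := by
          gcongr
          exact ih (abs_add_four_mul_sq_mul_le hv (sq_nonneg _) hσ hb)
      _ ≤ exp (6 * v * b ^ 2 * (exp (2 * (x i ^ 2 + σ)) - 1)) := by
          rw [← exp_add, exp_le_exp]
          exact mgf_exponent_step hv (sq_nonneg _) (hx i) hσ hb₁

end PartialSums

theorem stmt3 :
    ∃ C : ℝ, 0 < C ∧ ∃ c : ℝ, 0 < c ∧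
      ∀ (K : ℝ), 0 < K →
      ∀ (m n : ℕ) (Ω : Type) (_ : MeasurableSpace Ω) (μ : Measure Ω),
        IsProbabilityMeasure μ →
        ∀ A : Fin n → Ω → EuclideanSpace ℝ (Fin m),
          (∀ i, Measurable (A i)) →
          iIndepFun A μ →
          (∀ i, Integrable (A i) μ) →
          (∀ i, ∫ ω, A i ω ∂μ = 0) →
          (∀ i, SubgaussianVec μ (A i)) →
          (∀ i, ∀ᵐ ω ∂μ, ‖A i ω‖ = 1) →
          (∀ i, vpsi2 μ (A i) ≤ K) →
          ∀ x : EuclideanSpace ℝ (Fin n), ‖x‖ = 1 →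
            ∀ l : ℝ, |l| ≤ c / K ^ 2 →
              ∫ ω, Real.exp (l * (‖∑ i, x i • A i ω‖ ^ 2 - 1)) ∂μ ≤
                Real.exp (C * l ^ 2 * K ^ 2) := by
  refine ⟨48 * (exp 2 - 1), by linarith [add_one_le_exp (2 : ℝ)], 1 / 128, by norm_num, ?_⟩
  intro K hK m n Ω _ μ _ A hAm hA hAint hAmean hAsub hAnorm hAK x hx l hl
  have hx₁ : ∑ i, x i ^ 2 = 1 := by rw [← EuclideanSpace.real_norm_sq_eq, hx, one_pow]
  have hxi : ∀ i, x i ^ 2 ≤ 1 := fun i =>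
    hx₁ ▸ Finset.single_le_sum (fun j _ => sq_nonneg (x j)) (Finset.mem_univ i)
  have hl' : |l| ≤ (2 - ∑ i, x i ^ 2) / (16 * (8 * K ^ 2)) := by
    rw [hx₁]; convert hl using 1; ring
  have key := integral_exp_norm_sum_smul_sq_le hAm hA hAnorm (by positivity)
    (fun i => integral_exp_mul_inner_le (hAint i) (hAmean i) (hAsub i) (hAnorm i) hK (hAK i))
    hxi Finset.univ hl'
  rw [hx₁, mul_one] at key
  convert key using 2
  ring
end

section
/- Let Z be a random variable satisfying P(|Z^2 - 1| >= t) <= 2*exp(-(c/K^2)*min(t^2,t)) for all t >= 0, where Z >= 0 almost surely. Then P(|Z - 1| >= delta) <= 2*exp(-c*delta^2/K^2) for all delta >= 0. -/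
open MeasureTheory ProbabilityTheory Real
open scoped BigOperators ENNReal

/-! For `z ≥ 0`, `|z² - 1| = |z - 1| (z + 1) ≥ max (|z - 1|, |z - 1|²)`, so the event
`|Z - 1| ≥ δ` lies inside `|Z² - 1| ≥ t` for `t = max (δ, δ²)`, and this choice of `t` makes
the exponent `min (t², t)` of the assumed tail bound exactly `δ²`. -/

lemma max_abs_sub_one_sq_le_abs_sq_sub_one {z : ℝ} (hz : 0 ≤ z) :
    max |z - 1| (|z - 1| ^ 2) ≤ |z ^ 2 - 1| := by
  have hfactor : |z ^ 2 - 1| = |z - 1| * (z + 1) := by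
    rw [show z ^ 2 - 1 = (z - 1) * (z + 1) by ring, abs_mul,
      abs_of_pos (show 0 < z + 1 by linarith)]
  have hle : |z - 1| ≤ z + 1 := by
    simpa [abs_of_nonneg hz] using abs_sub z 1
  rw [hfactor, sq]
  exact max_le (le_mul_of_one_le_right (abs_nonneg _) (by linarith))
    (mul_le_mul_of_nonneg_left hle (abs_nonneg _))

lemma min_sq_self_max_self_sq {δ : ℝ} (hδ : 0 ≤ δ) :
    min (max δ (δ ^ 2) ^ 2) (max δ (δ ^ 2)) = δ ^ 2 := by
  rcases le_total δ 1 with h | h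
  · have hle : δ ^ 2 ≤ δ := pow_le_of_le_one hδ h two_ne_zero
    rw [max_eq_left hle, min_eq_left hle]
  · have hle : δ ^ 2 ≤ (δ ^ 2) ^ 2 := le_self_pow₀ (one_le_pow₀ h) two_ne_zero
    rw [max_eq_right (le_self_pow₀ h two_ne_zero), min_eq_right hle]

theorem stmt7_general (c K : ℝ)
    (Ω : Type) [MeasurableSpace Ω] (μ : Measure Ω)
    (Z : Ω → ℝ)
    (hpos : ∀ᵐ ω ∂μ, 0 ≤ Z ω)
    (htail : ∀ t : ℝ, 0 ≤ t →
      μ {ω | t ≤ |Z ω ^ 2 - 1|} ≤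
        ENNReal.ofReal (2 * Real.exp (-(c / K ^ 2) * min (t ^ 2) t))) :
    ∀ δ : ℝ, 0 ≤ δ →
      μ {ω | δ ≤ |Z ω - 1|} ≤
        ENNReal.ofReal (2 * Real.exp (-c * δ ^ 2 / K ^ 2)) := by
  intro δ hδ
  set t := max δ (δ ^ 2)
  calc μ {ω | δ ≤ |Z ω - 1|} ≤ μ {ω | t ≤ |Z ω ^ 2 - 1|} := by
        refine measure_mono_ae ?_
        filter_upwards [hpos] with ω hω (hδω : δ ≤ |Z ω - 1|)
        exact (max_le_max hδω (pow_le_pow_left₀ hδ hδω 2)).trans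
          (max_abs_sub_one_sq_le_abs_sq_sub_one hω)
    _ ≤ ENNReal.ofReal (2 * Real.exp (-(c / K ^ 2) * min (t ^ 2) t)) :=
      htail t (hδ.trans (le_max_left _ _))
    _ = ENNReal.ofReal (2 * Real.exp (-c * δ ^ 2 / K ^ 2)) := by
      rw [min_sq_self_max_self_sq hδ]
      ring_nf

theorem stmt7 (c K : ℝ) (hc : 0 < c) (hK : 0 < K)
    (Ω : Type) [MeasurableSpace Ω] (μ : Measure Ω) [IsProbabilityMeasure μ]
    (Z : Ω → ℝ)
    (hpos : ∀ᵐ ω ∂μ, 0 ≤ Z ω)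
    (htail : ∀ t : ℝ, 0 ≤ t →
      μ {ω | t ≤ |Z ω ^ 2 - 1|} ≤
        ENNReal.ofReal (2 * Real.exp (-(c / K ^ 2) * min (t ^ 2) t))) :
    ∀ δ : ℝ, 0 ≤ δ →
      μ {ω | δ ≤ |Z ω - 1|} ≤
        ENNReal.ofReal (2 * Real.exp (-c * δ ^ 2 / K ^ 2)) :=
  stmt7_general c K Ω μ Z hpos htail
end

section
/- Let Y be a random vector in R^m whose entries are independent and take value 1 or -1 each with probability s/(2m), and 0 with probability 1 - s/m, where 1 <= s <= m. Then ||Y||_{psi_2} <= C / sqrt(log(1 + m/s)) for an absolute constant C. -/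
/-!
With `p = s / m`, each entry has mgf `1 - p + p cosh t`. Splitting at `|t| = log (1 + 1/p) / 2`
(where `p e^{|t|} ≤ √(2p)` on one side and `|t| ≤ 2t² / log (1 + 1/p)` on the other) gives
`1 - p + p cosh t ≤ exp (2 t² / log (1 + 1/p))`, so every entry, and by independence every unit
marginal `Z = ⟪Y, u⟫`, has a sub-Gaussian mgf with variance proxy `c = 4 / log (1 + m/s)`.
Writing `exp (Z² / (4c))` as a Gaussian integral of `exp (λ Z)` and exchanging the integrals turns
the mgf bound into `E exp (Z² / (4c)) ≤ √2`, i.e. `‖Z‖_ψ₂ ≤ 2 √c = 4 / √(log (1 + m/s))`.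
-/

open MeasureTheory ProbabilityTheory Real
open scoped BigOperators ENNReal

/-- The law of a single entry: `±1` with probability `s/(2m)` each, `0` otherwise. -/
noncomputable def sparseEntryLaw (m s : ℕ) : Measure ℝ :=
  ENNReal.ofReal ((s : ℝ) / (2 * m)) • Measure.dirac 1 +
    ENNReal.ofReal ((s : ℝ) / (2 * m)) • Measure.dirac (-1) +
    ENNReal.ofReal (1 - (s : ℝ) / m) • Measure.dirac 0

open scoped Nat NNReal

namespace Real

lemma cosh_sub_one_le_sq_div_two_mul_cosh (x : ℝ) : cosh x - 1 ≤ x ^ 2 / 2 * cosh x := by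
  have hshift : HasSum (fun n ↦ x ^ (2 * (n + 1)) / ↑(2 * (n + 1))!) (cosh x - 1) := by
    simpa using (hasSum_nat_add_iff' 1).2 (hasSum_cosh x)
  refine hasSum_le (fun n ↦ ?_) hshift ((hasSum_cosh x).mul_left (x ^ 2 / 2))
  have hfact : 2 * (2 * n)! ≤ (2 * (n + 1))! :=
    calc 2 * (2 * n)! ≤ (2 * n + 2) * (2 * n + 1)! :=
          Nat.mul_le_mul (by omega) (Nat.factorial_le (by omega))
      _ = (2 * (n + 1))! := (Nat.factorial_succ _).symm
  calc x ^ (2 * (n + 1)) / ↑(2 * (n + 1))! ≤ x ^ (2 * (n + 1)) / ↑(2 * (2 * n)!) := by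
        gcongr
        exact (even_two_mul _).pow_nonneg x
    _ = x ^ 2 / 2 * (x ^ (2 * n) / ↑(2 * n)!) := by push_cast; ring

lemma cosh_le_exp_abs (x : ℝ) : cosh x ≤ exp |x| := by
  rw [← cosh_abs, cosh_eq]
  have : exp (-|x|) ≤ exp |x| := exp_le_exp.2 (by linarith [abs_nonneg x])
  linarith

lemma sqrt_mul_log_one_add_inv_le {p : ℝ} (hp0 : 0 < p) (hp1 : p ≤ 1) :
    √p * log (1 + p⁻¹) ≤ 2 * √2 := by
  have hlog : log (1 + p⁻¹) ≤ 2 * √(1 + p⁻¹) := by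
    have := log_le_rpow_div (x := 1 + p⁻¹) (by positivity) (by norm_num : (0 : ℝ) < 1 / 2)
    rwa [← sqrt_eq_rpow, div_div_eq_mul_div, div_one, mul_comm] at this
  calc √p * log (1 + p⁻¹) ≤ √p * (2 * √(1 + p⁻¹)) := by gcongr
    _ = 2 * √(p * (1 + p⁻¹)) := by rw [sqrt_mul hp0.le]; ring
    _ = 2 * √(p + 1) := by rw [mul_add, mul_inv_cancel₀ hp0.ne', mul_one]
    _ ≤ 2 * √2 := by gcongr; linarith

lemma mul_exp_half_log_one_add_inv_le {p : ℝ} (hp0 : 0 < p) (hp1 : p ≤ 1) :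
    p * exp (log (1 + p⁻¹) / 2) ≤ √2 * √p := by
  calc p * exp (log (1 + p⁻¹) / 2) = √(p ^ 2 * (1 + p⁻¹)) := by
        rw [exp_half, exp_log (by positivity), sqrt_mul (sq_nonneg p), sqrt_sq hp0.le]
    _ = √(p ^ 2 + p) := by congr 1; field_simp
    _ ≤ √(2 * p) := by gcongr; nlinarith
    _ = √2 * √p := sqrt_mul zero_le_two p

lemma one_sub_add_mul_cosh_le_exp_of_abs_le {p w : ℝ} (hp0 : 0 < p) (hp1 : p ≤ 1)
    (hw : |w| ≤ log (1 + p⁻¹) / 2) :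
    1 - p + p * cosh w ≤ exp (2 * w ^ 2 / log (1 + p⁻¹)) := by
  set L := log (1 + p⁻¹)
  have hL : 0 < L := log_pos (by simpa using hp0)
  have hsqrt : √2 * √p ≤ 4 / L := by
    rw [le_div_iff₀ hL]
    nlinarith [sqrt_mul_log_one_add_inv_le hp0 hp1, sq_sqrt (zero_le_two (α := ℝ)),
      sqrt_nonneg 2]
  have hcosh : p * (cosh w - 1) ≤ 2 * w ^ 2 / L :=
    calc p * (cosh w - 1) ≤ w ^ 2 / 2 * (p * exp (L / 2)) := by
          have hexp := (cosh_le_exp_abs w).trans (exp_le_exp.2 hw)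
          calc p * (cosh w - 1) ≤ p * (w ^ 2 / 2 * cosh w) := by
                gcongr; exact cosh_sub_one_le_sq_div_two_mul_cosh w
            _ ≤ p * (w ^ 2 / 2 * exp (L / 2)) := by gcongr
            _ = w ^ 2 / 2 * (p * exp (L / 2)) := by ring
      _ ≤ w ^ 2 / 2 * (4 / L) := by
          gcongr
          exact (mul_exp_half_log_one_add_inv_le hp0 hp1).trans hsqrt
      _ = 2 * w ^ 2 / L := by ring
  calc 1 - p + p * cosh w = p * (cosh w - 1) + 1 := by ring
    _ ≤ exp (p * (cosh w - 1)) := add_one_le_exp _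
    _ ≤ exp (2 * w ^ 2 / L) := exp_le_exp.2 hcosh

lemma one_sub_add_mul_cosh_le_exp_of_le_abs {p w : ℝ} (hp0 : 0 < p) (hp1 : p ≤ 1)
    (hw : log (1 + p⁻¹) / 2 ≤ |w|) :
    1 - p + p * cosh w ≤ exp (2 * w ^ 2 / log (1 + p⁻¹)) := by
  have hL : 0 < log (1 + p⁻¹) := log_pos (by simpa using hp0)
  have habs : |w| ≤ 2 * w ^ 2 / log (1 + p⁻¹) := by
    rw [le_div_iff₀ hL, ← sq_abs]
    nlinarith [abs_nonneg w]
  calc 1 - p + p * cosh w ≤ cosh w := by nlinarith [one_le_cosh w]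
    _ ≤ exp |w| := cosh_le_exp_abs w
    _ ≤ exp (2 * w ^ 2 / log (1 + p⁻¹)) := exp_le_exp.2 habs

/-- Hoeffding's lemma only gives `exp (w ^ 2 / 2)`; the gain by the factor `log (1 + 1/p)` for
small `p` is what makes sparse entries better than Rademacher ones. -/
lemma one_sub_add_mul_cosh_le_exp {p : ℝ} (hp0 : 0 < p) (hp1 : p ≤ 1) (w : ℝ) :
    1 - p + p * cosh w ≤ exp (2 * w ^ 2 / log (1 + p⁻¹)) := by
  rcases le_total |w| (log (1 + p⁻¹) / 2) with hw | hw
  · exact one_sub_add_mul_cosh_le_exp_of_abs_le hp0 hp1 hw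
  · exact one_sub_add_mul_cosh_le_exp_of_le_abs hp0 hp1 hw

end Real

lemma integrable_exp_mul_smul_dirac (t c a : ℝ) :
    Integrable (fun y ↦ exp (t * y)) (ENNReal.ofReal c • Measure.dirac a) :=
  (integrable_dirac (by simp)).smul_measure ENNReal.ofReal_ne_top

lemma integrable_exp_mul_sparseEntryLaw (m s : ℕ) (t : ℝ) :
    Integrable (fun y ↦ exp (t * y)) (sparseEntryLaw m s) :=
  ((integrable_exp_mul_smul_dirac t _ 1).add_measure
    (integrable_exp_mul_smul_dirac t _ (-1))).add_measure (integrable_exp_mul_smul_dirac t _ 0)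

lemma mgf_id_sparseEntryLaw {m s : ℕ} (hsm : s ≤ m) (t : ℝ) :
    mgf id (sparseEntryLaw m s) t = 1 - (s : ℝ) / m + (s : ℝ) / m * cosh t := by
  have hdirac := integrable_exp_mul_smul_dirac t
  have hp : (s : ℝ) / m ≤ 1 := div_le_one_of_le₀ (by exact_mod_cast hsm) (Nat.cast_nonneg m)
  rw [mgf, sparseEntryLaw]
  simp only [id]
  rw [integral_add_measure ((hdirac _ 1).add_measure (hdirac _ (-1))) (hdirac _ 0),
    integral_add_measure (hdirac _ 1) (hdirac _ (-1))]
  simp only [integral_smul_measure, integral_dirac, smul_eq_mul]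
  rw [ENNReal.toReal_ofReal (by positivity), ENNReal.toReal_ofReal (by linarith), cosh_eq]
  simp only [mul_one, mul_neg, mul_zero, exp_zero]
  ring

lemma hasSubgaussianMGF_id_sparseEntryLaw {m s : ℕ} (hs : 1 ≤ s) (hsm : s ≤ m) :
    HasSubgaussianMGF id (4 / log (1 + (m : ℝ) / s)).toNNReal (sparseEntryLaw m s) where
  integrable_exp_mul := integrable_exp_mul_sparseEntryLaw m s
  mgf_le t := by
    have hs' : (0 : ℝ) < s := by exact_mod_cast hs
    have hm : (0 : ℝ) < m := by exact_mod_cast hs.trans hsm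
    have hp1 : (s : ℝ) / m ≤ 1 := div_le_one_of_le₀ (by exact_mod_cast hsm) hm.le
    have hL : 0 ≤ log (1 + (m : ℝ) / s) := log_nonneg (le_add_of_nonneg_right (by positivity))
    rw [mgf_id_sparseEntryLaw hsm, Real.coe_toNNReal _ (by positivity)]
    convert one_sub_add_mul_cosh_le_exp (by positivity) hp1 t using 2
    rw [inv_div]
    ring

lemma lintegral_ofReal_exp_neg_mul_sq {b : ℝ} (hb : 0 < b) :
    ∫⁻ x, ENNReal.ofReal (exp (-b * x ^ 2)) = ENNReal.ofReal √(π / b) := by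
  rw [← ofReal_integral_eq_lintegral_ofReal (integrable_exp_neg_mul_sq hb)
    (ae_of_all _ fun _ ↦ (exp_pos _).le), integral_gaussian]

lemma lintegral_ofReal_exp_mul_sub_sq_div_two (a : ℝ) :
    ∫⁻ x, ENNReal.ofReal (exp (a * x - x ^ 2 / 2)) =
      ENNReal.ofReal (√(2 * π) * exp (a ^ 2 / 2)) := by
  have hsquare (x : ℝ) : exp (a * x - x ^ 2 / 2) = exp (a ^ 2 / 2) * exp (-2⁻¹ * (x - a) ^ 2) := by
    rw [← exp_add]; ring_nf
  have hint : Integrable (fun x ↦ exp (a ^ 2 / 2) * exp (-2⁻¹ * (x - a) ^ 2)) :=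
    ((integrable_exp_neg_mul_sq (by norm_num)).comp_sub_right a).const_mul _
  simp_rw [hsquare]
  rw [← ofReal_integral_eq_lintegral_ofReal hint (ae_of_all _ fun _ ↦ by positivity),
    integral_const_mul, integral_sub_right_eq_self (fun x ↦ exp (-2⁻¹ * x ^ 2)) a,
    integral_gaussian, div_inv_eq_mul, mul_comm π, mul_comm]

namespace ProbabilityTheory.HasSubgaussianMGF

variable {Ω : Type*} [MeasurableSpace Ω] {μ : Measure Ω} {Z : Ω → ℝ} {c : ℝ≥0}

lemma lintegral_ofReal_exp_mul_le (hZ : HasSubgaussianMGF Z c μ) (t : ℝ) :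
    ∫⁻ ω, ENNReal.ofReal (exp (t * Z ω)) ∂μ ≤ ENNReal.ofReal (exp (c * t ^ 2 / 2)) := by
  rw [← ofReal_integral_eq_lintegral_ofReal (hZ.integrable_exp_mul t)
    (ae_of_all _ fun _ ↦ (exp_pos _).le)]
  exact ENNReal.ofReal_le_ofReal (hZ.mgf_le t)

lemma lintegral_ofReal_exp_mul_sub_sq_div_two_le (hZ : HasSubgaussianMGF Z c μ) (b x : ℝ) :
    ∫⁻ ω, ENNReal.ofReal (exp (b * Z ω * x - x ^ 2 / 2)) ∂μ ≤
      ENNReal.ofReal (exp (-((1 - c * b ^ 2) / 2) * x ^ 2)) :=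
  calc ∫⁻ ω, ENNReal.ofReal (exp (b * Z ω * x - x ^ 2 / 2)) ∂μ
      = ENNReal.ofReal (exp (-x ^ 2 / 2)) * ∫⁻ ω, ENNReal.ofReal (exp (b * x * Z ω)) ∂μ := by
        rw [← lintegral_const_mul' _ _ ENNReal.ofReal_ne_top]
        refine lintegral_congr fun ω ↦ ?_
        rw [← ENNReal.ofReal_mul (exp_pos _).le, ← exp_add]
        ring_nf
    _ ≤ ENNReal.ofReal (exp (-x ^ 2 / 2)) * ENNReal.ofReal (exp (c * (b * x) ^ 2 / 2)) := by
        gcongr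
        exact hZ.lintegral_ofReal_exp_mul_le _
    _ = ENNReal.ofReal (exp (-((1 - c * b ^ 2) / 2) * x ^ 2)) := by
        rw [← ENNReal.ofReal_mul (exp_pos _).le, ← exp_add]
        ring_nf

lemma lintegral_exp_sq_div_le [SFinite μ] (hZ : HasSubgaussianMGF Z c μ) (hc : 0 < c) :
    ∫⁻ ω, ENNReal.ofReal (exp (Z ω ^ 2 / (4 * c))) ∂μ ≤ ENNReal.ofReal √2 := by
  set b : ℝ := (√(2 * (c : ℝ)))⁻¹
  have hb : b ^ 2 = (2 * (c : ℝ))⁻¹ := by rw [inv_pow, sq_sqrt (by positivity)]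
  have hinner (x : ℝ) : ∫⁻ ω, ENNReal.ofReal (exp (b * Z ω * x - x ^ 2 / 2)) ∂μ ≤
      ENNReal.ofReal (exp (-4⁻¹ * x ^ 2)) := by
    convert hZ.lintegral_ofReal_exp_mul_sub_sq_div_two_le b x using 5
    rw [hb]
    field_simp
    norm_num
  have hmeas : AEMeasurable (Function.uncurry fun ω x ↦
      ENNReal.ofReal (exp (b * Z ω * x - x ^ 2 / 2))) (μ.prod volume) := by
    have hZ₁ := hZ.aemeasurable.comp_fst (ν := (volume : Measure ℝ))
    exact ENNReal.measurable_ofReal.comp_aemeasurable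
      (((hZ₁.const_mul b).mul measurable_snd.aemeasurable).sub (by fun_prop)).exp
  have h2π : ENNReal.ofReal √(2 * π) ≠ 0 := by simp [pi_pos]
  refine (ENNReal.mul_le_mul_iff_right h2π ENNReal.ofReal_ne_top).1 ?_
  calc ENNReal.ofReal √(2 * π) * ∫⁻ ω, ENNReal.ofReal (exp (Z ω ^ 2 / (4 * c))) ∂μ
      = ∫⁻ ω, (∫⁻ x, ENNReal.ofReal (exp (b * Z ω * x - x ^ 2 / 2))) ∂μ := by
        rw [← lintegral_const_mul' _ _ ENNReal.ofReal_ne_top]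
        refine lintegral_congr fun ω ↦ ?_
        rw [lintegral_ofReal_exp_mul_sub_sq_div_two, ENNReal.ofReal_mul (sqrt_nonneg _), mul_pow,
          hb]
        congr 3; field_simp; ring
    _ = ∫⁻ x, ∫⁻ ω, ENNReal.ofReal (exp (b * Z ω * x - x ^ 2 / 2)) ∂μ :=
        lintegral_lintegral_swap hmeas
    _ ≤ ∫⁻ x : ℝ, ENNReal.ofReal (exp (-4⁻¹ * x ^ 2)) := lintegral_mono hinner
    _ = ENNReal.ofReal √(2 * π) * ENNReal.ofReal √2 := by
        rw [lintegral_ofReal_exp_neg_mul_sq (by norm_num), ← ENNReal.ofReal_mul (sqrt_nonneg _),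
          ← sqrt_mul (by positivity)]
        congr 2; ring

lemma psi2_le [SFinite μ] (hZ : HasSubgaussianMGF Z c μ) (hc : 0 < c) : psi2 μ Z ≤ 2 * √c := by
  refine csInf_le ⟨0, fun t ht ↦ ht.1.le⟩ ⟨by positivity, ?_⟩
  have hsq : (2 * √(c : ℝ)) ^ 2 = 4 * c := by rw [mul_pow, sq_sqrt c.coe_nonneg]; norm_num
  rw [hsq, integral_eq_lintegral_of_nonneg_ae (ae_of_all _ fun _ ↦ by positivity)
    (hZ.aemeasurable.pow_const 2 |>.div_const _ |>.exp).aestronglyMeasurable]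
  calc (∫⁻ ω, ENNReal.ofReal (exp (Z ω ^ 2 / (4 * c))) ∂μ).toReal ≤ √2 :=
        ENNReal.toReal_le_of_le_ofReal (sqrt_nonneg _) (hZ.lintegral_exp_sq_div_le hc)
    _ ≤ 2 := by rw [sqrt_le_left (by norm_num)]; norm_num

end ProbabilityTheory.HasSubgaussianMGF

lemma vpsi2_le_of_iIndepFun {Ω : Type*} [MeasurableSpace Ω] {μ : Measure Ω}
    [SFinite μ] {m : ℕ} {Y : Fin m → Ω → ℝ} {c : ℝ≥0} (hc : 0 < c)
    (hindep : iIndepFun Y μ)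
    (hY : ∀ i, HasSubgaussianMGF (Y i) c μ) :
    vpsi2 μ (fun ω ↦ (show EuclideanSpace ℝ (Fin m) from WithLp.toLp 2 (fun i ↦ Y i ω))) ≤
      2 * √c := by
  refine Real.iSup_le (fun u ↦ ?_) (by positivity)
  obtain ⟨u, hu⟩ := u
  have hinner : (fun ω ↦ inner ℝ
      (show EuclideanSpace ℝ (Fin m) from WithLp.toLp 2 (fun i ↦ Y i ω)) u) =
        fun ω ↦ ∑ i, u i * Y i ω := by
    funext ω
    simp [PiLp.inner_apply, mul_comm]
  have hterm (i : Fin m) : HasSubgaussianMGF (fun ω ↦ u i * Y i ω) (‖u i‖₊ ^ 2 * c) μ := by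
    convert (hY i).const_mul (u i) using 2
    ext
    simp only [NNReal.coe_mul, NNReal.coe_pow, coe_nnnorm, norm_eq_abs, sq_abs]
    rfl
  have hsum : HasSubgaussianMGF (fun ω ↦ ∑ i, u i * Y i ω) (∑ i, ‖u i‖₊ ^ 2 * c) μ :=
    HasSubgaussianMGF.sum_of_iIndepFun
      (hindep.comp (fun i y ↦ u i * y) (fun i ↦ measurable_const_mul (u i))) (fun i _ ↦ hterm i)
  have hc_eq : ∑ i, ‖u i‖₊ ^ 2 * c = c := by
    ext
    push_cast
    rw [← Finset.sum_mul, ← EuclideanSpace.norm_sq_eq, hu, one_pow, one_mul]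
  rw [hc_eq] at hsum
  rw [hinner]
  exact hsum.psi2_le hc

theorem stmt15 :
    ∃ C : ℝ, 0 < C ∧
      ∀ (m s : ℕ), 1 ≤ s → s ≤ m →
      ∀ (Ω : Type) (_ : MeasurableSpace Ω) (μ : Measure Ω),
        IsProbabilityMeasure μ →
        ∀ Y : Fin m → Ω → ℝ,
          (∀ i, Measurable (Y i)) →
          iIndepFun Y μ →
          (∀ i, Measure.map (Y i) μ = sparseEntryLaw m s) →
          vpsi2 μ (fun ω => (show EuclideanSpace ℝ (Fin m) from WithLp.toLp 2 (fun i => Y i ω))) ≤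
            C / Real.sqrt (Real.log (1 + (m : ℝ) / s)) := by
  refine ⟨4, by norm_num, fun m s hs hsm Ω _ μ _ Y hYmeas hYindep hYlaw ↦ ?_⟩
  have hL : 0 < log (1 + (m : ℝ) / s) :=
    log_pos (lt_add_of_pos_right 1 (by have : 0 < m := hs.trans hsm; positivity))
  have hY (i : Fin m) : HasSubgaussianMGF (Y i) (4 / log (1 + (m : ℝ) / s)).toNNReal μ :=
    (HasSubgaussianMGF.id_map_iff (hYmeas i).aemeasurable).1
      (hYlaw i ▸ hasSubgaussianMGF_id_sparseEntryLaw hs hsm)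
  calc _ ≤ 2 * √((4 / log (1 + (m : ℝ) / s)).toNNReal : ℝ) :=
        vpsi2_le_of_iIndepFun (by positivity) hYindep hY
    _ = 4 / √(log (1 + (m : ℝ) / s)) := by
        rw [Real.coe_toNNReal _ (by positivity), sqrt_div' _ hL.le,
          show (4 : ℝ) = 2 ^ 2 by norm_num, sqrt_sq zero_le_two]
        ring
end
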